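/- arXiv:2304.12552 — 3 statements merged into one kernel-verified Lean document; each statement's English description precedes it below -/
import Mathlib

section
/- Let n ≥ 2, α > 0, and let ω be a majorant. Then there exists a constant M > 0 such that for every x in the open unit ball B^n with x ≠ 0, ∫_{S^{n-1}} ω(|x − ζ|)/|x − ζ|^{n+α} dσ(ζ) ≤ M ω(1 − |x|)/(1 − |x|)^{1+α}. -/
/-!
For `t = ‖x - ζ‖ ≥ 1 - ‖x‖ =: d`, monotonicity of `ω t / t` gives
`ω t / t ^ (n + α) ≤ (ω d / d) · t ^ (-(n - 1 + α))`, so it suffices to show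
`∫ ‖x - ζ‖ ^ (-(n - 1 + α)) dσ(ζ) ≲ d ^ (-α)`. With `e = x / ‖x‖` we have
`‖x - ζ‖ ≥ max ‖ζ - e‖ d / 2`. A cap `{ζ : ‖ζ - e‖ < r}` has `σ`-measure `O(r ^ (n - 1))`,
because the cone over it fits in a box with sides `2, 2r, …, 2r`. Splitting the sphere into
the caps of radii `2 ^ k d` turns the integral into a geometric series `d ^ (-α) ∑ 2 ^ (-k α)`.
-/

open MeasureTheory Real Filter Metric

/-- The rotation-invariant Borel probability measure on the unit sphere
`S^{n-1} ⊆ ℝ^n` (normalized so that the total mass is 1). -/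
noncomputable def sphereMeasure (n : ℕ) :
    Measure (Metric.sphere (0 : EuclideanSpace ℝ (Fin n)) 1) :=
  (((volume : Measure (EuclideanSpace ℝ (Fin n))).toSphere Set.univ)⁻¹ •
    (volume : Measure (EuclideanSpace ℝ (Fin n))).toSphere)

/-- The constant `C_α = Γ((n+α)/2)Γ(1+α/2)/(Γ(n/2)Γ(1+α))`. -/
noncomputable def Cconst (n : ℕ) (α : ℝ) : ℝ :=
  Real.Gamma ((n + α) / 2) * Real.Gamma (1 + α / 2) /
    (Real.Gamma (n / 2) * Real.Gamma (1 + α))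

/-- The Poisson type kernel `𝐏_α(x,ζ) = C_α (1−|x|²)^{1+α}/|x−ζ|^{n+α}`. -/
noncomputable def poissonKer (n : ℕ) (α : ℝ) (x : EuclideanSpace ℝ (Fin n))
    (ζ : Metric.sphere (0 : EuclideanSpace ℝ (Fin n)) 1) : ℝ :=
  Cconst n α * (1 - ‖x‖ ^ 2) ^ (1 + α) /
    ‖x - (ζ : EuclideanSpace ℝ (Fin n))‖ ^ ((n : ℝ) + α)

/-- A majorant: a continuous increasing `ω : [0,∞) → [0,∞)` with `ω 0 = 0`
such that `ω t / t` is non-increasing on `(0,∞)`. -/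
def IsMajorant (ω : ℝ → ℝ) : Prop :=
  ContinuousOn ω (Set.Ici 0) ∧ MonotoneOn ω (Set.Ici 0) ∧ ω 0 = 0 ∧
    (∀ t, 0 ≤ t → 0 ≤ ω t) ∧ AntitoneOn (fun t => ω t / t) (Set.Ioi 0)

/-- A fast majorant: a majorant satisfying `∫₀^λ ω(t)/t dt ≤ M ω(λ)` for all
`0 < λ < λ₀`, for some `λ₀ > 0` and `M > 0`. -/
def IsFastMajorant (ω : ℝ → ℝ) : Prop :=
  IsMajorant ω ∧ ∃ lam₀ > (0 : ℝ), ∃ M > (0 : ℝ), ∀ lam : ℝ, 0 < lam → lam < lam₀ →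
    ∫⁻ t in Set.Ioc (0 : ℝ) lam, ENNReal.ofReal (ω t / t) ≤ ENNReal.ofReal (M * ω lam)

theorem dyadic_rpow_identity {K m s d : ℝ} (hd : 0 < d) (k : ℕ) :
    (2 ^ k * d / 2) ^ (-s) * (K * (2 ^ k * d) ^ m) =
      2 ^ s * K * d ^ (m - s) * (2 ^ (m - s)) ^ k := by
  have h2k : (0 : ℝ) < 2 ^ k := by positivity
  rw [div_rpow (by positivity) zero_le_two, mul_rpow h2k.le hd.le, mul_rpow h2k.le hd.le,
    rpow_neg zero_le_two, ← rpow_natCast, ← rpow_mul zero_le_two, ← rpow_mul zero_le_two,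
    ← rpow_natCast (2 ^ (m - s)), ← rpow_mul zero_le_two, rpow_sub hd, rpow_neg hd.le,
    show (m - s) * (k : ℝ) = k * -s + k * m by ring, rpow_add two_pos]
  field_simp

theorem lintegral_ofReal_max_rpow_neg_le {X : Type*} [MeasurableSpace X] (μ : Measure X)
    {ρ : X → ℝ} (hρ : Measurable ρ) {K m s d : ℝ} (hK : 0 ≤ K) (hs : 0 ≤ s) (hms : m < s)
    (hd : 0 < d) (hcap : ∀ r > 0, μ {x | ρ x < r} ≤ ENNReal.ofReal (K * r ^ m)) :
    ∫⁻ x, ENNReal.ofReal (max (ρ x) d ^ (-s)) ∂μ ≤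
      ENNReal.ofReal (2 ^ s * K / (1 - 2 ^ (m - s)) * d ^ (m - s)) := by
  set q : ℝ := 2 ^ (m - s)
  have hq0 : 0 ≤ q := by positivity
  have hq1 : q < 1 := rpow_lt_one_of_one_lt_of_neg one_lt_two (by linarith)
  set ball : ℕ → Set X := fun k => {x | ρ x < 2 ^ k * d}
  have hcover : ∀ x, ENNReal.ofReal (max (ρ x) d ^ (-s)) ≤
      ∑' k, (ball k).indicator (fun _ => ENNReal.ofReal ((2 ^ k * d / 2) ^ (-s))) x := by
    intro x
    -- `x` lies in a dyadic ball of radius at most `2 * max (ρ x) d`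
    obtain ⟨k, hk, hk'⟩ :=
      exists_nat_pow_near ((one_le_div hd).2 (le_max_right (ρ x) d)) one_lt_two
    refine le_trans ?_ (ENNReal.le_tsum (k + 1))
    have hmem : x ∈ ball (k + 1) := by
      show ρ x < 2 ^ (k + 1) * d
      linarith [(div_lt_iff₀ hd).1 hk', le_max_left (ρ x) d]
    rw [Set.indicator_of_mem hmem]
    refine ENNReal.ofReal_le_ofReal (rpow_le_rpow_of_nonpos (by positivity) ?_ (by linarith))
    rw [pow_succ]
    linarith [(le_div_iff₀ hd).1 hk]
  have hball : ∀ k, ∫⁻ x, (ball k).indicator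
      (fun _ => ENNReal.ofReal ((2 ^ k * d / 2) ^ (-s))) x ∂μ ≤
        ENNReal.ofReal (2 ^ s * K * d ^ (m - s)) * ENNReal.ofReal q ^ k := by
    intro k
    rw [lintegral_indicator_const (measurableSet_lt hρ measurable_const)]
    calc _ ≤ ENNReal.ofReal ((2 ^ k * d / 2) ^ (-s)) * ENNReal.ofReal (K * (2 ^ k * d) ^ m) := by
          gcongr; exact hcap _ (by positivity)
      _ = _ := by
          rw [← ENNReal.ofReal_mul (by positivity), dyadic_rpow_identity hd,
            ENNReal.ofReal_mul (by positivity), ENNReal.ofReal_pow hq0]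
  calc ∫⁻ x, ENNReal.ofReal (max (ρ x) d ^ (-s)) ∂μ
      ≤ ∫⁻ x, ∑' k, (ball k).indicator
          (fun _ => ENNReal.ofReal ((2 ^ k * d / 2) ^ (-s))) x ∂μ := lintegral_mono hcover
    _ = ∑' k, ∫⁻ x, (ball k).indicator
          (fun _ => ENNReal.ofReal ((2 ^ k * d / 2) ^ (-s))) x ∂μ :=
        lintegral_tsum fun k =>
          (measurable_const.indicator (measurableSet_lt hρ measurable_const)).aemeasurable
    _ ≤ ∑' k, ENNReal.ofReal (2 ^ s * K * d ^ (m - s)) * ENNReal.ofReal q ^ k :=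
        ENNReal.tsum_le_tsum hball
    _ = ENNReal.ofReal (2 ^ s * K * d ^ (m - s)) * (1 - ENNReal.ofReal q)⁻¹ := by
        rw [ENNReal.tsum_mul_left, ENNReal.tsum_geometric]
    _ = ENNReal.ofReal (2 ^ s * K / (1 - q) * d ^ (m - s)) := by
        rw [← ENNReal.ofReal_one, ← ENNReal.ofReal_sub _ hq0,
          ← ENNReal.ofReal_inv_of_pos (by linarith), ← ENNReal.ofReal_mul (by positivity)]
        congr 1
        ring

section InnerProductSpace

open Pointwise RealInnerProductSpace

variable {F : Type*} [NormedAddCommGroup F] [InnerProductSpace ℝ F]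

theorem abs_inner_smul_sub_le {e ζ v : F} (hv : ‖v‖ = 1) (hve : ⟪v, e⟫ = 0) {t : ℝ}
    (ht : |t| ≤ 1) : |⟪v, t • ζ⟫| ≤ ‖ζ - e‖ := by
  have : ⟪v, t • ζ⟫ = t * ⟪v, ζ - e⟫ := by
    rw [inner_smul_right, inner_sub_right, hve, sub_zero]
  rw [this, abs_mul]
  calc |t| * |⟪v, ζ - e⟫| ≤ 1 * (‖v‖ * ‖ζ - e‖) :=
        mul_le_mul ht (abs_real_inner_le_norm _ _) (abs_nonneg _) zero_le_one
    _ = ‖ζ - e‖ := by rw [hv, one_mul, one_mul]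

variable [FiniteDimensional ℝ F] [MeasurableSpace F] [BorelSpace F]

theorem OrthonormalBasis.volume_setOf_abs_repr_le {ι : Type*} [Fintype ι]
    (b : OrthonormalBasis ι ℝ F) (c : ι → ℝ) :
    volume {z : F | ∀ i, |b.repr z i| ≤ c i} = ∏ i, ENNReal.ofReal (2 * c i) := by
  have hbox : {z : F | ∀ i, |b.repr z i| ≤ c i} =
      (WithLp.ofLp ∘ b.repr) ⁻¹' Set.univ.pi fun i => Set.Icc (-c i) (c i) := by
    ext z
    simp only [Set.mem_ofPred_eq, Set.mem_preimage, Set.mem_univ_pi, Set.mem_Icc, abs_le,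
      Function.comp_apply]
  rw [hbox, ((PiLp.volume_preserving_ofLp ι).comp b.measurePreserving_repr).measure_preimage
    (MeasurableSet.univ_pi fun _ => measurableSet_Icc).nullMeasurableSet, volume_pi_pi]
  simp only [Real.volume_Icc]
  ring_nf

theorem volume_cone_setOf_norm_sub_lt_le {e : F} (he : ‖e‖ = 1) {r : ℝ} (hr : 0 ≤ r) :
    volume (Set.Ioo (0 : ℝ) 1 • (Subtype.val '' {ζ : sphere (0 : F) 1 | ‖(ζ : F) - e‖ < r})) ≤
      ENNReal.ofReal (2 ^ Module.finrank ℝ F * r ^ (Module.finrank ℝ F - 1)) := by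
  have : Nontrivial F := ⟨⟨e, 0, by rintro rfl; simp at he⟩⟩
  obtain ⟨m, hm⟩ : ∃ m, Module.finrank ℝ F = m + 1 :=
    Nat.exists_eq_add_one.2 Module.finrank_pos
  have horth : Orthonormal ℝ (({0} : Set (Fin (m + 1))).domRestrict fun _ => e) :=
    ⟨fun _ => he, fun i j hij => absurd (Subsingleton.elim i j) hij⟩
  obtain ⟨b, hb⟩ := horth.exists_orthonormalBasis_extension_of_card_eq (by simp [hm])
  have hb0 : b 0 = e := hb 0 rfl
  have hcone : Set.Ioo (0 : ℝ) 1 • (Subtype.val '' {ζ : sphere (0 : F) 1 | ‖(ζ : F) - e‖ < r}) ⊆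
      {z : F | ∀ i, |b.repr z i| ≤ (Fin.cons 1 fun _ => r : Fin (m + 1) → ℝ) i} := by
    rintro _ ⟨t, ht, _, ⟨ζ, hζ, rfl⟩, rfl⟩ i
    have hζ1 : ‖(ζ : F)‖ = 1 := mem_sphere_zero_iff_norm.1 ζ.2
    have ht1 : |t| ≤ 1 := by rw [abs_of_pos ht.1]; exact ht.2.le
    rw [b.repr_apply_apply]
    refine Fin.cases ?_ (fun j => ?_) i
    · calc |⟪b 0, t • (ζ : F)⟫| ≤ ‖b 0‖ * ‖t • (ζ : F)‖ := abs_real_inner_le_norm _ _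
        _ ≤ 1 := by rw [b.orthonormal.1 0, norm_smul, hζ1, Real.norm_eq_abs]; linarith
    · have hbe : ⟪b j.succ, e⟫ = 0 := by
        rw [← hb0]; exact b.orthonormal.2 (Fin.succ_ne_zero j)
      exact (abs_inner_smul_sub_le (b.orthonormal.1 _) hbe ht1).trans hζ.le
  calc _ ≤ _ := measure_mono hcone
    _ = ENNReal.ofReal (2 ^ (m + 1) * r ^ m) := by
        rw [b.volume_setOf_abs_repr_le, Fin.prod_univ_succ]
        simp only [Fin.cons_zero, Fin.cons_succ, Finset.prod_const, Finset.card_univ,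
          Fintype.card_fin]
        rw [← ENNReal.ofReal_pow (by positivity), ← ENNReal.ofReal_mul (by positivity)]
        ring_nf
    _ = _ := by rw [hm, Nat.add_sub_cancel]

theorem toSphere_setOf_norm_sub_lt_le {e : F} (he : ‖e‖ = 1) {r : ℝ} (hr : 0 ≤ r) :
    (volume : Measure F).toSphere {ζ | ‖(ζ : F) - e‖ < r} ≤
      ENNReal.ofReal (Module.finrank ℝ F * 2 ^ Module.finrank ℝ F *
        r ^ (Module.finrank ℝ F - 1)) := by
  have hcap : MeasurableSet {ζ : sphere (0 : F) 1 | ‖(ζ : F) - e‖ < r} :=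
    (isOpen_lt (continuous_subtype_val.sub continuous_const).norm continuous_const).measurableSet
  rw [Measure.toSphere_apply' _ hcap, mul_assoc, ENNReal.ofReal_mul (by positivity),
    ENNReal.ofReal_natCast]
  gcongr
  exact volume_cone_setOf_norm_sub_lt_le he hr

end InnerProductSpace

section NormedSpace

variable {E : Type*} [NormedAddCommGroup E]

theorem one_sub_norm_le_norm_sub {x ζ : E} (hζ : ‖ζ‖ = 1) : 1 - ‖x‖ ≤ ‖x - ζ‖ := by
  rw [norm_sub_rev, ← hζ]
  exact norm_sub_norm_le ζ x

variable [NormedSpace ℝ E]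

theorem max_norm_sub_normalize_le {x ζ : E} (hx0 : x ≠ 0) (hx : ‖x‖ ≤ 1) (hζ : ‖ζ‖ = 1) :
    max ‖ζ - ‖x‖⁻¹ • x‖ (1 - ‖x‖) ≤ 2 * ‖x - ζ‖ := by
  have hxpos : 0 < ‖x‖ := norm_pos_iff.2 hx0
  have hdist := one_sub_norm_le_norm_sub (x := x) hζ
  have hxe : ‖x - ‖x‖⁻¹ • x‖ = 1 - ‖x‖ := by
    rw [show x - ‖x‖⁻¹ • x = (1 - ‖x‖⁻¹) • x by rw [sub_smul, one_smul], norm_smul,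
      Real.norm_of_nonpos (sub_nonpos.2 ((one_le_inv₀ hxpos).2 hx))]
    field_simp
    ring
  refine max_le ?_ (by linarith [norm_nonneg (x - ζ)])
  calc ‖ζ - ‖x‖⁻¹ • x‖ ≤ ‖ζ - x‖ + ‖x - ‖x‖⁻¹ • x‖ := norm_sub_le_norm_sub_add_norm_sub _ _ _
    _ ≤ 2 * ‖x - ζ‖ := by rw [norm_sub_rev, hxe]; linarith

theorem norm_sub_rpow_neg_le {x ζ : E} (hx0 : x ≠ 0) (hx : ‖x‖ < 1) (hζ : ‖ζ‖ = 1) {s : ℝ}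
    (hs : 0 ≤ s) :
    ‖x - ζ‖ ^ (-s) ≤ 2 ^ s * max ‖ζ - ‖x‖⁻¹ • x‖ (1 - ‖x‖) ^ (-s) := by
  have hd : 0 < 1 - ‖x‖ := by linarith
  calc ‖x - ζ‖ ^ (-s) = 2 ^ s * (2 * ‖x - ζ‖) ^ (-s) := by
        rw [mul_rpow zero_le_two (norm_nonneg _), rpow_neg zero_le_two, ← mul_assoc,
          mul_inv_cancel₀ (by positivity), one_mul]
    _ ≤ _ := mul_le_mul_of_nonneg_left (rpow_le_rpow_of_nonpos (lt_max_of_lt_right hd)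
          (max_norm_sub_normalize_le hx0 hx.le hζ) (neg_nonpos.2 hs)) (by positivity)

end NormedSpace

theorem sphereMeasure_setOf_norm_sub_lt_le {n : ℕ} (hn : 1 ≤ n) :
    ∃ K > 0, ∀ e : EuclideanSpace ℝ (Fin n), ‖e‖ = 1 → ∀ r > 0,
      sphereMeasure n {ζ | ‖(ζ : EuclideanSpace ℝ (Fin n)) - e‖ < r} ≤
        ENNReal.ofReal (K * r ^ ((n : ℝ) - 1)) := by
  set ν := (volume : Measure (EuclideanSpace ℝ (Fin n))).toSphere
  have hν0 : ν Set.univ ≠ 0 := by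
    rw [Measure.toSphere_apply_univ, finrank_euclideanSpace_fin]
    exact mul_ne_zero (by simp; omega) (measure_ball_pos _ _ one_pos).ne'
  have hνinv : 0 < (ν Set.univ)⁻¹.toReal :=
    ENNReal.toReal_pos (ENNReal.inv_ne_zero.2 (measure_ne_top ν _)) (ENNReal.inv_ne_top.2 hν0)
  refine ⟨(ν Set.univ)⁻¹.toReal * (n * 2 ^ n), by positivity, fun e he r hr => ?_⟩
  have hcap := toSphere_setOf_norm_sub_lt_le he hr.le
  rw [finrank_euclideanSpace_fin] at hcap
  rw [sphereMeasure, Measure.smul_apply, smul_eq_mul, mul_assoc,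
    ENNReal.ofReal_mul hνinv.le, ENNReal.ofReal_toReal (ENNReal.inv_ne_top.2 hν0),
    show (n : ℝ) - 1 = ((n - 1 : ℕ) : ℝ) by rw [Nat.cast_sub hn, Nat.cast_one], rpow_natCast]
  gcongr

theorem lintegral_sphereMeasure_norm_sub_rpow_le {n : ℕ} (hn : 1 ≤ n) {α : ℝ} (hα : 0 < α) :
    ∃ C > 0, ∀ x : EuclideanSpace ℝ (Fin n), ‖x‖ < 1 → x ≠ 0 →
      ∫⁻ ζ, ENNReal.ofReal (‖x - (ζ : EuclideanSpace ℝ (Fin n))‖ ^ (-((n : ℝ) - 1 + α)))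
        ∂(sphereMeasure n) ≤ ENNReal.ofReal (C * (1 - ‖x‖) ^ (-α)) := by
  obtain ⟨K, hK, hcap⟩ := sphereMeasure_setOf_norm_sub_lt_le hn
  set s := (n : ℝ) - 1 + α
  have hs : 0 ≤ s := by
    have : (1 : ℝ) ≤ n := by exact_mod_cast hn
    linarith
  have hq : 0 < 1 - (2 : ℝ) ^ (-α) :=
    sub_pos.2 (rpow_lt_one_of_one_lt_of_neg one_lt_two (neg_neg_of_pos hα))
  refine ⟨2 ^ s * (2 ^ s * K / (1 - 2 ^ (-α))), by positivity, fun x hx hx0 => ?_⟩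
  set e := ‖x‖⁻¹ • x
  have he : ‖e‖ = 1 := by
    rw [norm_smul, norm_inv, norm_norm, inv_mul_cancel₀ (norm_ne_zero_iff.2 hx0)]
  have hρ : Measurable fun ζ : sphere (0 : EuclideanSpace ℝ (Fin n)) 1 =>
      ‖(ζ : EuclideanSpace ℝ (Fin n)) - e‖ := by fun_prop
  have hdyadic := lintegral_ofReal_max_rpow_neg_le (sphereMeasure n) hρ hK.le hs
    (by linarith) (d := 1 - ‖x‖) (by linarith) (hcap e he)
  rw [show (n : ℝ) - 1 - s = -α by ring] at hdyadic
  calc _ ≤ ∫⁻ ζ, ENNReal.ofReal (2 ^ s) * ENNReal.ofReal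
          (max ‖(ζ : EuclideanSpace ℝ (Fin n)) - e‖ (1 - ‖x‖) ^ (-s)) ∂(sphereMeasure n) := by
        refine lintegral_mono fun ζ => ?_
        rw [← ENNReal.ofReal_mul (by positivity)]
        exact ENNReal.ofReal_le_ofReal
          (norm_sub_rpow_neg_le hx0 hx (mem_sphere_zero_iff_norm.1 ζ.2) hs)
    _ = ENNReal.ofReal (2 ^ s) * ∫⁻ ζ, ENNReal.ofReal
          (max ‖(ζ : EuclideanSpace ℝ (Fin n)) - e‖ (1 - ‖x‖) ^ (-s)) ∂(sphereMeasure n) :=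
        lintegral_const_mul' _ _ ENNReal.ofReal_ne_top
    _ ≤ ENNReal.ofReal (2 ^ s) *
          ENNReal.ofReal (2 ^ s * K / (1 - 2 ^ (-α)) * (1 - ‖x‖) ^ (-α)) := by gcongr
    _ = _ := by rw [← ENNReal.ofReal_mul (by positivity), mul_assoc]

theorem IsMajorant.div_rpow_le {ω : ℝ → ℝ} (hω : IsMajorant ω) {d t : ℝ} (hd : 0 < d)
    (hdt : d ≤ t) (β : ℝ) : ω t / t ^ (1 + β) ≤ ω d / d * t ^ (-β) := by
  have ht : 0 < t := hd.trans_le hdt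
  rw [rpow_add ht, rpow_one, rpow_neg ht.le, ← div_div, div_eq_mul_inv (ω t / t)]
  exact mul_le_mul_of_nonneg_right (hω.2.2.2.2 hd ht hdt) (by positivity)

/-- **Estimate of the integral `J₁`.** For `n ≥ 2`, `α > 0` and a majorant `ω`,
`∫_{S^{n-1}} ω(|x−ζ|)/|x−ζ|^{n+α} dσ(ζ) ≤ M ω(1−|x|)/(1−|x|)^{1+α}` on `B^n \ {0}`. -/
theorem integral_estimate_J1 (n : ℕ) (hn : 2 ≤ n) (α : ℝ) (hα : 0 < α)
    (ω : ℝ → ℝ) (hω : IsMajorant ω) :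
    ∃ M > (0 : ℝ), ∀ x ∈ Metric.ball (0 : EuclideanSpace ℝ (Fin n)) 1, x ≠ 0 →
      ∫⁻ ζ, ENNReal.ofReal
          (ω ‖x - (ζ : EuclideanSpace ℝ (Fin n))‖ /
            ‖x - (ζ : EuclideanSpace ℝ (Fin n))‖ ^ ((n : ℝ) + α)) ∂(sphereMeasure n) ≤
        ENNReal.ofReal (M * ω (1 - ‖x‖) / (1 - ‖x‖) ^ (1 + α)) := by
  obtain ⟨C, hC, hint⟩ := lintegral_sphereMeasure_norm_sub_rpow_le (by omega : 1 ≤ n) hα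
  refine ⟨C, hC, fun x hx hx0 => ?_⟩
  rw [mem_ball_zero_iff] at hx
  set d := 1 - ‖x‖
  have hd : 0 < d := by linarith
  have hωd : 0 ≤ ω d / d := div_nonneg (hω.2.2.2.1 d hd.le) hd.le
  calc _ ≤ ∫⁻ ζ, ENNReal.ofReal (ω d / d) * ENNReal.ofReal
          (‖x - (ζ : EuclideanSpace ℝ (Fin n))‖ ^ (-((n : ℝ) - 1 + α))) ∂(sphereMeasure n) := by
        refine lintegral_mono fun ζ => ?_
        rw [← ENNReal.ofReal_mul hωd, show (n : ℝ) + α = 1 + ((n : ℝ) - 1 + α) by ring]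
        exact ENNReal.ofReal_le_ofReal (hω.div_rpow_le hd
          (one_sub_norm_le_norm_sub (mem_sphere_zero_iff_norm.1 ζ.2)) _)
    _ = ENNReal.ofReal (ω d / d) * ∫⁻ ζ, ENNReal.ofReal
          (‖x - (ζ : EuclideanSpace ℝ (Fin n))‖ ^ (-((n : ℝ) - 1 + α))) ∂(sphereMeasure n) :=
        lintegral_const_mul' _ _ ENNReal.ofReal_ne_top
    _ ≤ ENNReal.ofReal (ω d / d) * ENNReal.ofReal (C * d ^ (-α)) := by
        gcongr; exact hint x hx hx0
    _ = _ := by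
        rw [← ENNReal.ofReal_mul hωd, rpow_add hd, rpow_one, rpow_neg hd.le]
        congr 1
        field_simp
end

section
/- Let n ≥ 2, α > 0, and let ω be a majorant. Then there exists a constant M > 0 such that for every x in the open unit ball B^n with x ≠ 0, ∫_{S^{n-1}} ω(|x − ζ|)/|x − ζ|^{n+α+1} dσ(ζ) ≤ M ω(1 − |x|)/(1 − |x|)^{2+α}. -/
open MeasureTheory Real Filter Metric

/-!
Put `d = 1 - ‖x‖`, so that `d ≤ ‖x - ζ‖` on the sphere. Since `ω t / t` decreases,
`ω r / r ^ (n + α + 1) ≤ (ω d / d) / r ^ (n + α)` for `r ≥ d`, and it remains to show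
`∫ ‖x - ζ‖ ^ (-(n + α)) dσ = O(d ^ (-(1 + α)))`. This follows by summing over the dyadic shells
`2 ^ k d ≤ ‖x - ζ‖ < 2 ^ (k + 1) d` once caps `{ζ | ‖x - ζ‖ < ρ}` are known to have measure
`O(ρ ^ (n - 1))`. For the caps, compare the cone `K = (0, 1) • cap` with its rescaling
`(1 - ρ) • K`: their difference lies in `ball x (2ρ)` and has volume at least `ρ · vol K`.
-/

open Set
open scoped Pointwise

section ConeOverSphere

variable {E : Type*} [NormedAddCommGroup E] [NormedSpace ℝ E]

theorem Ioo_smul_diff_smul_subset_ball {C : Set E} (hC : C ⊆ sphere 0 1) {x : E} {ρ r : ℝ}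
    (hr : 1 - ρ ≤ r) (hCx : C ⊆ ball x ρ) :
    Ioo (0 : ℝ) 1 • C \ r • (Ioo (0 : ℝ) 1 • C) ⊆ ball x (2 * ρ) := by
  rintro _ ⟨⟨t, ⟨ht0, ht1⟩, c, hc, rfl⟩, hnot⟩
  have hrt : r ≤ t := by
    by_contra! htr
    have hr0 : 0 < r := ht0.trans htr
    refine hnot ⟨(t / r) • c, smul_mem_smul ⟨by positivity, (div_lt_one hr0).2 htr⟩ hc, ?_⟩
    simp only [smul_smul, mul_div_cancel₀ t hr0.ne']
  have hc1 : ‖c‖ = 1 := mem_sphere_zero_iff_norm.1 (hC hc)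
  have htc : ‖t • c - c‖ = 1 - t := by
    rw [show t • c - c = (t - 1) • c by rw [sub_smul, one_smul], norm_smul, hc1, mul_one,
      Real.norm_eq_abs, abs_of_nonpos (by linarith)]
    ring
  have hcx : dist c x < ρ := hCx hc
  calc dist (t • c) x ≤ dist (t • c) c + dist c x := dist_triangle _ _ _
    _ < 2 * ρ := by rw [dist_eq_norm, htc]; linarith

variable [MeasurableSpace E] [BorelSpace E] [FiniteDimensional ℝ E] (μ : Measure E)
  [μ.IsAddHaarMeasure]

theorem addHaar_Ioo_smul_le_of_subset_ball [Nontrivial E] {C : Set E} (hC : C ⊆ sphere 0 1) {x : E} {ρ : ℝ}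
    (hρ0 : 0 < ρ) (hρ1 : ρ ≤ 1) (hCx : C ⊆ ball x ρ) :
    μ (Ioo (0 : ℝ) 1 • C) ≤
      ENNReal.ofReal (2 ^ Module.finrank ℝ E * ρ ^ ((Module.finrank ℝ E : ℝ) - 1)) *
        μ (ball 0 1) := by
  set d := Module.finrank ℝ E
  set K := Ioo (0 : ℝ) 1 • C
  have hd : 1 ≤ d := Module.finrank_pos
  have hK : μ K ≤ ENNReal.ofReal ((1 - ρ) ^ d) * μ K +
      ENNReal.ofReal ((2 * ρ) ^ d) * μ (ball 0 1) :=
    calc μ K ≤ μ ((1 - ρ) • K ∪ K \ (1 - ρ) • K) :=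
          measure_mono (by rw [union_sdiff_self]; exact subset_union_right)
      _ ≤ μ ((1 - ρ) • K) + μ (ball x (2 * ρ)) := by
        grw [measure_union_le, Ioo_smul_diff_smul_subset_ball hC le_rfl hCx]
      _ = _ := by
        rw [Measure.addHaar_smul, Measure.addHaar_ball _ _ (by positivity),
          abs_of_nonneg (pow_nonneg (by linarith) _)]
  have hKfin : μ K ≠ ⊤ := by
    refine ((measure_mono (smul_subset_smul_left hC)).trans_lt ?_).ne
    rw [Ioo_smul_sphere_zero le_rfl one_pos]
    exact (measure_mono sdiff_subset).trans_lt measure_ball_lt_top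
  have hBfin : μ (ball (0 : E) 1) ≠ ⊤ := measure_ball_lt_top.ne
  have hreal := ENNReal.toReal_mono (by finiteness) hK
  rw [ENNReal.toReal_add (by finiteness) (by finiteness), ENNReal.toReal_mul, ENNReal.toReal_mul,
    ENNReal.toReal_ofReal (by positivity), ENNReal.toReal_ofReal (by positivity)] at hreal
  have hpow : (1 - ρ) ^ d ≤ 1 - ρ := pow_le_of_le_one (by linarith) (by linarith) (by omega)
  rw [← ENNReal.ofReal_toReal hKfin, ← ENNReal.ofReal_toReal hBfin,
    ← ENNReal.ofReal_mul (by positivity)]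
  refine ENNReal.ofReal_le_ofReal (le_of_mul_le_mul_left ?_ hρ0)
  have hsplit : (2 * ρ) ^ d = ρ * (2 ^ d * ρ ^ ((d : ℝ) - 1)) := by
    rw [rpow_sub_one hρ0.ne', rpow_natCast, mul_pow]
    field_simp
  rw [← mul_assoc, ← hsplit]
  linarith [mul_le_mul_of_nonneg_right hpow (ENNReal.toReal_nonneg (a := μ K))]

theorem Measure.toSphere_cap_le (x : E) {ρ : ℝ} (hρ : 0 < ρ) :
    μ.toSphere {ζ | ‖x - ζ‖ < ρ} ≤
      ENNReal.ofReal (2 ^ Module.finrank ℝ E * ρ ^ ((Module.finrank ℝ E : ℝ) - 1)) *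
        μ.toSphere univ := by
  rcases subsingleton_or_nontrivial E with hE | hE
  · have : IsEmpty (sphere (0 : E) 1) := by
      rw [isEmpty_coe_sort, sphere_eq_empty_of_subsingleton one_ne_zero]
    simp [Set.eq_empty_of_isEmpty]
  rcases lt_or_ge 1 ρ with hρ1 | hρ1
  · have hbound : 1 ≤ 2 ^ Module.finrank ℝ E * ρ ^ ((Module.finrank ℝ E : ℝ) - 1) :=
      one_le_mul_of_one_le_of_one_le (one_le_pow₀ one_le_two)
        (one_le_rpow hρ1.le (sub_nonneg.2 (Nat.one_le_cast.2 Module.finrank_pos)))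
    calc μ.toSphere _ ≤ μ.toSphere univ := measure_mono (subset_univ _)
      _ ≤ _ := le_mul_of_one_le_left zero_le (by simpa using ENNReal.ofReal_le_ofReal hbound)
  rw [μ.toSphere_apply' (measurableSet_lt (by fun_prop) measurable_const), μ.toSphere_apply_univ]
  grw [addHaar_Ioo_smul_le_of_subset_ball μ (by rintro _ ⟨ζ, -, rfl⟩; exact ζ.2) hρ hρ1
    (by rintro _ ⟨ζ, hζ, rfl⟩; rwa [mem_ball, dist_comm, dist_eq_norm])]
  exact (mul_left_comm _ _ _).le

end ConeOverSphere

theorem lintegral_inv_rpow_le_of_measure_lt_le {X : Type*} [MeasurableSpace X] (μ : Measure X)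
    {g : X → ℝ} (hg : Measurable g) {d A m s : ℝ} (hd : 0 < d) (hA : 0 ≤ A) (hs : 0 ≤ s)
    (hms : m < s) (hgd : ∀ y, d ≤ g y)
    (hμ : ∀ ρ > 0, μ {y | g y < ρ} ≤ ENNReal.ofReal (A * ρ ^ m)) :
    ∫⁻ y, ENNReal.ofReal ((g y ^ s)⁻¹) ∂μ ≤
      ENNReal.ofReal (2 ^ m * A * d ^ (m - s) * (1 - 2 ^ (m - s))⁻¹) := by
  set q : ℝ := 2 ^ (m - s)
  have hq0 : 0 ≤ q := by positivity
  have hq1 : q < 1 := rpow_lt_one_of_one_lt_of_neg one_lt_two (by linarith)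
  set c : ℝ := 2 ^ m * A * d ^ (m - s)
  have hc : 0 ≤ c := by positivity
  let shell : ℕ → Set X := fun k => {y | 2 ^ k * d ≤ g y ∧ g y < 2 ^ (k + 1) * d}
  have hcover : ⋃ k, shell k = univ := by
    refine eq_univ_of_forall fun y => mem_iUnion.2 ?_
    obtain ⟨k, hk⟩ := exists_nat_pow_near ((one_le_div hd).2 (hgd y)) one_lt_two
    exact ⟨k, (le_div_iff₀ hd).1 hk.1, (div_lt_iff₀ hd).1 hk.2⟩
  have hshell (k : ℕ) : ∫⁻ y in shell k, ENNReal.ofReal ((g y ^ s)⁻¹) ∂μ ≤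
      ENNReal.ofReal (c * q ^ k) := by
    have hr : 0 < (2 : ℝ) ^ k * d := by positivity
    calc ∫⁻ y in shell k, ENNReal.ofReal ((g y ^ s)⁻¹) ∂μ
        ≤ ∫⁻ _ in shell k, ENNReal.ofReal (((2 ^ k * d) ^ s)⁻¹) ∂μ :=
          setLIntegral_mono' ((measurableSet_le measurable_const hg).inter
              (measurableSet_lt hg measurable_const)) fun y hy =>
            ENNReal.ofReal_le_ofReal
              (inv_anti₀ (by positivity) (rpow_le_rpow hr.le hy.1 hs))
      _ = ENNReal.ofReal (((2 ^ k * d) ^ s)⁻¹) * μ (shell k) := setLIntegral_const _ _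
      _ ≤ ENNReal.ofReal (((2 ^ k * d) ^ s)⁻¹) * ENNReal.ofReal (A * (2 ^ (k + 1) * d) ^ m) := by
          gcongr
          exact (measure_mono fun y hy => hy.2).trans (hμ _ (by positivity))
      _ = ENNReal.ofReal (c * q ^ k) := by
          rw [← ENNReal.ofReal_mul (by positivity)]
          congr 1
          have hscale : ((2 ^ k * d) ^ s)⁻¹ * (2 ^ k * d) ^ m = q ^ k * d ^ (m - s) := by
            rw [inv_mul_eq_div, ← rpow_sub hr, mul_rpow (by positivity) hd.le,
              ← rpow_pow_comm (by norm_num)]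
          rw [pow_succ, mul_comm _ (2 : ℝ), mul_assoc, mul_rpow (by norm_num) hr.le]
          linear_combination (2 ^ m * A) * hscale
  calc ∫⁻ y, ENNReal.ofReal ((g y ^ s)⁻¹) ∂μ
      = ∫⁻ y in ⋃ k, shell k, ENNReal.ofReal ((g y ^ s)⁻¹) ∂μ := by rw [hcover, setLIntegral_univ]
    _ ≤ ∑' k, ∫⁻ y in shell k, ENNReal.ofReal ((g y ^ s)⁻¹) ∂μ := lintegral_iUnion_le _ _
    _ ≤ ∑' k, ENNReal.ofReal (c * q ^ k) := ENNReal.tsum_le_tsum hshell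
    _ = ENNReal.ofReal (c * (1 - q)⁻¹) := by
        rw [← ENNReal.ofReal_tsum_of_nonneg (fun k => by positivity)
            ((summable_geometric_of_lt_one hq0 hq1).mul_left c),
          tsum_mul_left, tsum_geometric_of_lt_one hq0 hq1]

theorem sphereMeasure_cap_le (n : ℕ) (x : EuclideanSpace ℝ (Fin n)) {ρ : ℝ} (hρ : 0 < ρ) :
    sphereMeasure n {ζ | ‖x - (ζ : EuclideanSpace ℝ (Fin n))‖ < ρ} ≤
      ENNReal.ofReal (2 ^ n * ρ ^ ((n : ℝ) - 1)) := by
  rw [sphereMeasure, Measure.smul_apply, smul_eq_mul]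
  grw [Measure.toSphere_cap_le volume x hρ, finrank_euclideanSpace_fin, mul_left_comm,
    ENNReal.inv_mul_le_one, mul_one]

theorem div_rpow_add_one_le_of_antitoneOn {ω : ℝ → ℝ}
    (hω : AntitoneOn (fun t => ω t / t) (Ioi 0)) {d r : ℝ} (s : ℝ) (hd : 0 < d) (hdr : d ≤ r) :
    ω r / r ^ (s + 1) ≤ ω d / d * (r ^ s)⁻¹ := by
  have hr : 0 < r := hd.trans_le hdr
  rw [rpow_add_one hr.ne', div_mul_eq_div_div_swap, div_eq_mul_inv]
  exact mul_le_mul_of_nonneg_right (hω hd hr hdr) (by positivity)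

theorem integral_estimate_J2_general (n : ℕ) (α : ℝ) (hα : 0 < α)
    (ω : ℝ → ℝ) (hω : IsMajorant ω) :
    ∃ M > (0 : ℝ), ∀ x ∈ Metric.ball (0 : EuclideanSpace ℝ (Fin n)) 1, x ≠ 0 →
      ∫⁻ ζ, ENNReal.ofReal
          (ω ‖x - (ζ : EuclideanSpace ℝ (Fin n))‖ /
            ‖x - (ζ : EuclideanSpace ℝ (Fin n))‖ ^ ((n : ℝ) + α + 1)) ∂(sphereMeasure n) ≤
        ENNReal.ofReal (M * ω (1 - ‖x‖) / (1 - ‖x‖) ^ (2 + α)) := by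
  obtain ⟨-, -, -, hω_nonneg, hω_div⟩ := hω
  have hq : (2 : ℝ) ^ ((n : ℝ) - 1 - (n + α)) < 1 :=
    rpow_lt_one_of_one_lt_of_neg one_lt_two (by linarith)
  refine ⟨2 ^ ((n : ℝ) - 1) * 2 ^ n * (1 - 2 ^ ((n : ℝ) - 1 - (n + α)))⁻¹,
    by have := sub_pos.2 hq; positivity, ?_⟩
  rintro x hx -
  set d := 1 - ‖x‖
  have hd : 0 < d := sub_pos.2 (mem_ball_zero_iff.1 hx)
  have hdist (ζ : sphere (0 : EuclideanSpace ℝ (Fin n)) 1) : d ≤ ‖x - ζ‖ :=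
    sub_le_iff_le_add.2 <| by
      simpa [norm_sub_rev x] using norm_sub_norm_le (ζ : EuclideanSpace ℝ (Fin n)) x
  have hωd : 0 ≤ ω d / d := div_nonneg (hω_nonneg d hd.le) hd.le
  have hJ := lintegral_inv_rpow_le_of_measure_lt_le (sphereMeasure n) (s := n + α) (by fun_prop) hd
    (by positivity) (by positivity) (by linarith) hdist fun ρ hρ => sphereMeasure_cap_le n x hρ
  calc _ ≤ ∫⁻ ζ, ENNReal.ofReal (ω d / d) * ENNReal.ofReal ((‖x - ζ‖ ^ ((n : ℝ) + α))⁻¹)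
            ∂(sphereMeasure n) :=
        lintegral_mono fun ζ => by
          rw [← ENNReal.ofReal_mul hωd]
          exact ENNReal.ofReal_le_ofReal
            (div_rpow_add_one_le_of_antitoneOn hω_div _ hd (hdist ζ))
    _ = ENNReal.ofReal (ω d / d) *
          ∫⁻ ζ, ENNReal.ofReal ((‖x - ζ‖ ^ ((n : ℝ) + α))⁻¹) ∂(sphereMeasure n) :=
        lintegral_const_mul' _ _ ENNReal.ofReal_ne_top
    _ ≤ _ := by
        grw [hJ, ← ENNReal.ofReal_mul hωd]
        refine le_of_eq (congrArg _ ?_)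
        rw [show (n : ℝ) - 1 - (n + α) = 1 - (2 + α) by ring, rpow_sub hd, rpow_one]
        field_simp

/-- **Estimate of the integral `J₂`.** For `n ≥ 2`, `α > 0` and a majorant `ω`,
`∫_{S^{n-1}} ω(|x−ζ|)/|x−ζ|^{n+α+1} dσ(ζ) ≤ M ω(1−|x|)/(1−|x|)^{2+α}` on `B^n \ {0}`. -/
theorem integral_estimate_J2 (n : ℕ) (hn : 2 ≤ n) (α : ℝ) (hα : 0 < α)
    (ω : ℝ → ℝ) (hω : IsMajorant ω) :
    ∃ M > (0 : ℝ), ∀ x ∈ Metric.ball (0 : EuclideanSpace ℝ (Fin n)) 1, x ≠ 0 →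
      ∫⁻ ζ, ENNReal.ofReal
          (ω ‖x - (ζ : EuclideanSpace ℝ (Fin n))‖ /
            ‖x - (ζ : EuclideanSpace ℝ (Fin n))‖ ^ ((n : ℝ) + α + 1)) ∂(sphereMeasure n) ≤
        ENNReal.ofReal (M * ω (1 - ‖x‖) / (1 - ‖x‖) ^ (2 + α)) :=
  integral_estimate_J2_general n α hα ω hω
end

section
/- Let n ≥ 2 and let ω be a fast majorant. If u : B^n → ℝ is differentiable on the open unit ball B^n and there exists M₀ > 0 such that |∇u(x)| ≤ M₀ ω(1 − |x|)/(1 − |x|) for all x ∈ B^n, then u ∈ Λ_ω(B^n); that is, there exists M > 0 such that |u(x) − u(y)| ≤ M ω(|x − y|) for all x, y ∈ B^n. -/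
open MeasureTheory Real Filter Metric

/-!
For `d = |x - y| < 1`, retract `x` and `y` radially onto the closed ball of radius `1 - d`.
Moving a point `z` radially to that radius changes `u` by at most
`M₀ ∫_{1-|z|}^{d} ω(t)/t dt ≤ M₀ M₁ ω(d)`, by fastness of `ω`. The retraction is `1`-Lipschitz and
on the smaller ball `|∇u| ≤ M₀ ω(d)/d`, so the mean value theorem bounds the difference of the
retracted values by `M₀ ω(d)`. Pairs with `d ≥ 1` are compared through the origin instead.
-/

open Set
open scoped InnerProductSpace

variable {ω : ℝ → ℝ}

namespace IsMajorant

lemma nonneg (hω : IsMajorant ω) {t : ℝ} (ht : 0 ≤ t) : 0 ≤ ω t := hω.2.2.2.1 t ht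

lemma monotoneOn (hω : IsMajorant ω) : MonotoneOn ω (Ici 0) := hω.2.1

lemma antitoneOn_div (hω : IsMajorant ω) : AntitoneOn (fun t => ω t / t) (Ioi 0) := hω.2.2.2.2

lemma antitoneOn_const_mul_div (hω : IsMajorant ω) {C : ℝ} (hC : 0 ≤ C) :
    AntitoneOn (fun t => C * ω t / t) (Ioi 0) := by
  intro a ha b hb hab
  simp only [mul_div_assoc]
  exact mul_le_mul_of_nonneg_left (hω.antitoneOn_div ha hb hab) hC

lemma lintegral_Ioc_div_le (hω : IsMajorant ω) {c s : ℝ} (hc : 0 < c) (hcs : c ≤ s) :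
    ∫⁻ t in Ioc c s, ENNReal.ofReal (ω t / t) ≤ ENNReal.ofReal ((s - c) / c * ω s) := by
  have hωs : ω c / c ≤ ω s / c := by
    gcongr
    exact hω.monotoneOn (mem_Ici.2 hc.le) (mem_Ici.2 (hc.le.trans hcs)) hcs
  calc ∫⁻ t in Ioc c s, ENNReal.ofReal (ω t / t)
      ≤ ∫⁻ _ in Ioc c s, ENNReal.ofReal (ω s / c) :=
        setLIntegral_mono' measurableSet_Ioc fun t ht => ENNReal.ofReal_le_ofReal <|
          (hω.antitoneOn_div (mem_Ioi.2 hc) (mem_Ioi.2 (hc.trans ht.1)) ht.1.le).trans hωs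
    _ = ENNReal.ofReal ((s - c) / c * ω s) := by
        rw [setLIntegral_const, Real.volume_Ioc, ← ENNReal.ofReal_mul
          (div_nonneg (hω.nonneg (hc.le.trans hcs)) hc.le)]
        ring_nf

end IsMajorant

namespace IsFastMajorant

/-- Fastness is only assumed near `0`; away from `0`, `ω(t)/t ≤ ω(c)/c` extends it to `(0, L]`. -/
lemma exists_lintegral_le (hω : IsFastMajorant ω) (L : ℝ) :
    ∃ M ≥ 0, ∀ s, 0 < s → s ≤ L →
      ∫⁻ t in Ioc 0 s, ENNReal.ofReal (ω t / t) ≤ ENNReal.ofReal (M * ω s) := by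
  obtain ⟨hmaj, lam₀, hlam₀, K, hK, hfast⟩ := hω
  set c := lam₀ / 2 with hc_def
  have hc : 0 < c := by positivity
  refine ⟨K + |L| / c, by positivity, fun s hs hsL => ?_⟩
  have hωs : 0 ≤ ω s := hmaj.nonneg hs.le
  have hfar : (s - c) / c * ω s ≤ |L| / c * ω s := by
    gcongr
    linarith [le_abs_self L]
  have hKM : K * ω s ≤ (K + |L| / c) * ω s := by
    have : 0 ≤ |L| / c * ω s := by positivity
    linarith
  obtain hslam | hlams := lt_or_ge s lam₀
  · exact (hfast s hs hslam).trans (ENNReal.ofReal_le_ofReal hKM)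
  have hcs : c ≤ s := by linarith
  have hnear : ∫⁻ t in Ioc 0 c, ENNReal.ofReal (ω t / t) ≤ ENNReal.ofReal (K * ω s) :=
    (hfast c hc (by linarith)).trans <| ENNReal.ofReal_le_ofReal <|
      mul_le_mul_of_nonneg_left (hmaj.monotoneOn (mem_Ici.2 hc.le) (mem_Ici.2 hs.le) hcs) hK.le
  calc ∫⁻ t in Ioc 0 s, ENNReal.ofReal (ω t / t)
      ≤ (∫⁻ t in Ioc 0 c, ENNReal.ofReal (ω t / t)) +
          ∫⁻ t in Ioc c s, ENNReal.ofReal (ω t / t) := by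
        rw [← Ioc_union_Ioc_eq_Ioc hc.le hcs]
        exact lintegral_union_le _ _ _
    _ ≤ ENNReal.ofReal (K * ω s) + ENNReal.ofReal ((s - c) / c * ω s) :=
        add_le_add hnear (hmaj.lintegral_Ioc_div_le hc hcs)
    _ ≤ ENNReal.ofReal ((K + |L| / c) * ω s) := by
        rw [← ENNReal.ofReal_add (by positivity) (mul_nonneg (div_nonneg (by linarith) hc.le) hωs)]
        exact ENNReal.ofReal_le_ofReal (by linarith)

lemma exists_integral_div_le (hω : IsFastMajorant ω) (L : ℝ) :
    ∃ M ≥ 0, ∀ a b, 0 < a → a ≤ b → b ≤ L → ∫ t in a..b, ω t / t ≤ M * ω b := by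
  obtain ⟨M, hM, hlint⟩ := hω.exists_lintegral_le L
  refine ⟨M, hM, fun a b ha hab hbL => ?_⟩
  have hnn : ∀ t ∈ Ioc a b, 0 ≤ ω t / t := fun t ht =>
    div_nonneg (hω.1.nonneg (ha.trans ht.1).le) (ha.trans ht.1).le
  rw [intervalIntegral.integral_of_le hab, ← ENNReal.ofReal_le_ofReal_iff
    (mul_nonneg hM (hω.1.nonneg (ha.le.trans hab)))]
  calc ENNReal.ofReal (∫ t in Ioc a b, ω t / t)
      ≤ ‖∫ t in Ioc a b, ω t / t‖ₑ := ENNReal.ofReal_le_of_le_toReal (by simp [le_abs_self])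
    _ ≤ ∫⁻ t in Ioc a b, ‖ω t / t‖ₑ := enorm_integral_le_lintegral_enorm _
    _ = ∫⁻ t in Ioc a b, ENNReal.ofReal (ω t / t) :=
        setLIntegral_congr_fun measurableSet_Ioc fun t ht => Real.enorm_of_nonneg (hnn t ht)
    _ ≤ ∫⁻ t in Ioc 0 b, ENNReal.ofReal (ω t / t) := lintegral_mono_set (Ioc_subset_Ioc_left ha.le)
    _ ≤ ENNReal.ofReal (M * ω b) := hlint b (ha.trans_le hab) hbL

end IsFastMajorant

section NormedSpace

variable {E F : Type*} [NormedAddCommGroup E] [NormedSpace ℝ E]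
  [NormedAddCommGroup F] [NormedSpace ℝ F] {f : E → F} {φ : ℝ → ℝ} {C M : ℝ}

lemma norm_sub_smul_le_integral (hf : DifferentiableOn ℝ f (ball 0 1))
    (hφ : AntitoneOn φ (Ioi 0)) (hbound : ∀ x ∈ ball (0 : E) 1, ‖fderiv ℝ f x‖ ≤ φ (1 - ‖x‖))
    {z : E} (hz : z ∈ ball (0 : E) 1) {s : ℝ} (hs₀ : 0 ≤ s) (hs₁ : s ≤ 1) :
    ‖f z - f (s • z)‖ ≤ ∫ t in (1 - ‖z‖)..(1 - ‖z‖ * s), φ t := by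
  rw [mem_ball_zero_iff] at hz
  have hlt : ∀ r ∈ Icc s 1, ‖z‖ * r < 1 := fun r hr =>
    (mul_le_of_le_one_right (norm_nonneg z) hr.2).trans_lt hz
  have hmem : ∀ r ∈ Icc s 1, r • z ∈ ball (0 : E) 1 := fun r hr => by
    rw [mem_ball_zero_iff, norm_smul, Real.norm_of_nonneg (hs₀.trans hr.1), mul_comm]
    exact hlt r hr
  have hderiv : ∀ r ∈ Icc s 1, HasDerivAt (fun r : ℝ => f (r • z)) (fderiv ℝ f (r • z) z) r := by
    intro r hr
    have hfr := (hf _ (hmem r hr)).differentiableAt (isOpen_ball.mem_nhds (hmem r hr))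
    have hcomp := hfr.hasFDerivAt.comp_hasDerivAt r ((hasDerivAt_id r).smul_const z)
    rwa [one_smul] at hcomp
  have hspeed : ∀ r ∈ Ioo s 1, ‖deriv (fun r : ℝ => f (r • z)) r‖ ≤ ‖z‖ * φ (1 - ‖z‖ * r) := by
    intro r hr
    have hr' : r ∈ Icc s 1 := Ioo_subset_Icc_self hr
    rw [(hderiv r hr').deriv, mul_comm]
    refine ((fderiv ℝ f (r • z)).le_opNorm z).trans (mul_le_mul_of_nonneg_right ?_ (norm_nonneg z))
    simpa [norm_smul, abs_of_nonneg (hs₀.trans hr'.1), mul_comm] using hbound _ (hmem r hr')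
  have hmono : MonotoneOn (fun r => ‖z‖ * φ (1 - ‖z‖ * r)) (uIcc s 1) := by
    rw [uIcc_of_le hs₁]
    intro a ha b hb hab
    refine mul_le_mul_of_nonneg_left (hφ (sub_pos.2 (hlt b hb)) (sub_pos.2 (hlt a ha)) ?_)
      (norm_nonneg z)
    exact sub_le_sub_left (mul_le_mul_of_nonneg_left hab (norm_nonneg z)) 1
  calc ‖f z - f (s • z)‖ = ‖f ((1 : ℝ) • z) - f (s • z)‖ := by rw [one_smul]
    _ ≤ ∫ r in s..1, ‖z‖ * φ (1 - ‖z‖ * r) :=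
        norm_sub_le_integral_of_norm_deriv_le_of_le hs₁
          (HasDerivAt.continuousOn hderiv)
          (fun r hr => (hderiv r (Ioo_subset_Icc_self hr)).differentiableAt.differentiableWithinAt)
          (ae_of_all _ hspeed) hmono.intervalIntegrable
    _ = ∫ t in (1 - ‖z‖)..(1 - ‖z‖ * s), φ t := by
        rw [intervalIntegral.integral_const_mul, intervalIntegral.mul_integral_comp_sub_mul,
          mul_one]

lemma norm_sub_le_of_mem_closedBall (hf : DifferentiableOn ℝ f (ball 0 1))
    (hφ : AntitoneOn φ (Ioi 0)) (hbound : ∀ x ∈ ball (0 : E) 1, ‖fderiv ℝ f x‖ ≤ φ (1 - ‖x‖))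
    {ρ : ℝ} (hρ : ρ < 1) {x y : E} (hx : x ∈ closedBall 0 ρ) (hy : y ∈ closedBall 0 ρ) :
    ‖f x - f y‖ ≤ φ (1 - ρ) * ‖x - y‖ := by
  have hsub : closedBall (0 : E) ρ ⊆ ball 0 1 := closedBall_subset_ball hρ
  refine (convex_closedBall 0 ρ).norm_image_sub_le_of_norm_fderiv_le
    (fun w hw => (hf w (hsub hw)).differentiableAt (isOpen_ball.mem_nhds (hsub hw)))
    (fun w hw => ?_) hy hx
  have hwρ : ‖w‖ ≤ ρ := mem_closedBall_zero_iff.1 hw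
  exact (hbound w (hsub hw)).trans
    (hφ (sub_pos.2 hρ) (sub_pos.2 (hwρ.trans_lt hρ)) (sub_le_sub_left hwρ 1))

noncomputable def radialRetraction (ρ : ℝ) (x : E) : E :=
  if ‖x‖ ≤ ρ then x else (ρ / ‖x‖) • x

lemma norm_radialRetraction_le {ρ : ℝ} (hρ : 0 ≤ ρ) (x : E) : ‖radialRetraction ρ x‖ ≤ ρ := by
  unfold radialRetraction
  split_ifs with h
  · exact h
  · have hx : 0 < ‖x‖ := hρ.trans_lt (not_le.1 h)
    rw [norm_smul, Real.norm_of_nonneg (div_nonneg hρ hx.le), div_mul_cancel₀ _ hx.ne']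

lemma radialRetraction_zero (x : E) : radialRetraction 0 x = 0 :=
  norm_le_zero_iff.1 (norm_radialRetraction_le le_rfl x)

lemma IsMajorant.norm_sub_radialRetraction_le (hω : IsMajorant ω) (hC : 0 ≤ C) (hM : 0 ≤ M)
    (hint : ∀ a b, 0 < a → a ≤ b → b ≤ 1 → ∫ t in a..b, ω t / t ≤ M * ω b)
    (hf : DifferentiableOn ℝ f (ball 0 1))
    (hbound : ∀ x ∈ ball (0 : E) 1, ‖fderiv ℝ f x‖ ≤ C * ω (1 - ‖x‖) / (1 - ‖x‖))
    {z : E} (hz : z ∈ ball (0 : E) 1) {ρ : ℝ} (hρ₀ : 0 ≤ ρ) (hρ₁ : ρ < 1) :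
    ‖f z - f (radialRetraction ρ z)‖ ≤ C * M * ω (1 - ρ) := by
  unfold radialRetraction
  split_ifs with h
  · rw [sub_self, norm_zero]
    exact mul_nonneg (mul_nonneg hC hM) (hω.nonneg (by linarith))
  have hz₀ : 0 < ‖z‖ := hρ₀.trans_lt (not_le.1 h)
  have hz₁ : ‖z‖ < 1 := mem_ball_zero_iff.1 hz
  calc ‖f z - f ((ρ / ‖z‖) • z)‖
      ≤ ∫ t in (1 - ‖z‖)..(1 - ‖z‖ * (ρ / ‖z‖)), C * ω t / t :=
        norm_sub_smul_le_integral (φ := fun t => C * ω t / t) hf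
          (hω.antitoneOn_const_mul_div hC) hbound hz (div_nonneg hρ₀ hz₀.le)
          (div_le_one_of_le₀ (not_le.1 h).le hz₀.le)
    _ = C * ∫ t in (1 - ‖z‖)..(1 - ρ), ω t / t := by
        simp only [mul_div_cancel₀ ρ hz₀.ne', mul_div_assoc, intervalIntegral.integral_const_mul]
    _ ≤ C * (M * ω (1 - ρ)) :=
        mul_le_mul_of_nonneg_left
          (hint _ _ (by linarith) (by linarith [not_le.1 h]) (by linarith)) hC
    _ = C * M * ω (1 - ρ) := (mul_assoc _ _ _).symm

lemma IsMajorant.norm_sub_le_of_one_le_norm_sub (hω : IsMajorant ω) (hC : 0 ≤ C) (hM : 0 ≤ M)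
    (hint : ∀ a b, 0 < a → a ≤ b → b ≤ 1 → ∫ t in a..b, ω t / t ≤ M * ω b)
    (hf : DifferentiableOn ℝ f (ball 0 1))
    (hbound : ∀ x ∈ ball (0 : E) 1, ‖fderiv ℝ f x‖ ≤ C * ω (1 - ‖x‖) / (1 - ‖x‖))
    {x y : E} (hx : x ∈ ball (0 : E) 1) (hy : y ∈ ball (0 : E) 1)
    (hxy : 1 ≤ ‖x - y‖) : ‖f x - f y‖ ≤ 2 * (C * M * ω ‖x - y‖) := by
  have hcentre : ∀ z ∈ ball (0 : E) 1, ‖f z - f 0‖ ≤ C * M * ω ‖x - y‖ := fun z hz => by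
    simpa [radialRetraction_zero] using
      (hω.norm_sub_radialRetraction_le hC hM hint hf hbound hz le_rfl one_pos).trans
        (mul_le_mul_of_nonneg_left
          (hω.monotoneOn (by simp) (mem_Ici.2 (zero_le_one.trans hxy)) (by simpa))
          (mul_nonneg hC hM))
  calc ‖f x - f y‖ ≤ ‖f x - f 0‖ + ‖f 0 - f y‖ := norm_sub_le_norm_sub_add_norm_sub ..
    _ ≤ C * M * ω ‖x - y‖ + C * M * ω ‖x - y‖ := by
        rw [norm_sub_rev (f 0)]
        exact add_le_add (hcentre x hx) (hcentre y hy)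
    _ = 2 * (C * M * ω ‖x - y‖) := by ring

end NormedSpace

section InnerProductSpace

variable {E F : Type*} [NormedAddCommGroup E] [InnerProductSpace ℝ E]
  [NormedAddCommGroup F] [NormedSpace ℝ F] {f : E → F} {C M : ℝ}

lemma norm_sub_le_of_inner_sub_nonpos {x y p q : E} (hp : ⟪x - p, q - p⟫_ℝ ≤ 0)
    (hq : ⟪y - q, p - q⟫_ℝ ≤ 0) : ‖p - q‖ ≤ ‖x - y‖ := by
  have hsplit : x - y = (x - p) - (y - q) + (p - q) := by abel
  rw [← neg_sub p q, inner_neg_right] at hp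
  have hsq : ‖p - q‖ ^ 2 ≤ ‖x - y‖ * ‖p - q‖ := by
    calc ‖p - q‖ ^ 2 ≤ ⟪x - y, p - q⟫_ℝ := by
          rw [hsplit, inner_add_left, inner_sub_left, real_inner_self_eq_norm_sq]
          linarith
      _ ≤ ‖x - y‖ * ‖p - q‖ := real_inner_le_norm _ _
  nlinarith [norm_nonneg (p - q), norm_nonneg (x - y)]

/-- The variational inequality characterising the nearest-point projection onto the ball. -/
lemma inner_sub_radialRetraction_nonpos {ρ : ℝ} {w : E} (hw : ‖w‖ ≤ ρ) (x : E) :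
    ⟪x - radialRetraction ρ x, w - radialRetraction ρ x⟫_ℝ ≤ 0 := by
  unfold radialRetraction
  split_ifs with h
  · simp
  · have hx : 0 < ‖x‖ := ((norm_nonneg w).trans hw).trans_lt (not_le.1 h)
    have hs : ρ / ‖x‖ * ‖x‖ ^ 2 = ρ * ‖x‖ := by field_simp
    have hs₁ : ρ / ‖x‖ ≤ 1 := div_le_one_of_le₀ (not_le.1 h).le hx.le
    have hxw : ⟪x, w⟫_ℝ ≤ ‖x‖ * ρ :=
      (real_inner_le_norm x w).trans (mul_le_mul_of_nonneg_left hw hx.le)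
    calc ⟪x - (ρ / ‖x‖) • x, w - (ρ / ‖x‖) • x⟫_ℝ
        = (1 - ρ / ‖x‖) * (⟪x, w⟫_ℝ - ρ / ‖x‖ * ‖x‖ ^ 2) := by
          simp only [inner_sub_left, inner_sub_right, real_inner_smul_left,
            real_inner_smul_right, real_inner_self_eq_norm_sq, norm_smul, mul_pow,
            Real.norm_eq_abs, sq_abs]
          ring
      _ ≤ 0 := mul_nonpos_of_nonneg_of_nonpos (sub_nonneg.2 hs₁) (by linarith)

lemma norm_radialRetraction_sub_le {ρ : ℝ} (hρ : 0 ≤ ρ) (x y : E) :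
    ‖radialRetraction ρ x - radialRetraction ρ y‖ ≤ ‖x - y‖ :=
  norm_sub_le_of_inner_sub_nonpos
    (inner_sub_radialRetraction_nonpos (norm_radialRetraction_le hρ y) x)
    (inner_sub_radialRetraction_nonpos (norm_radialRetraction_le hρ x) y)

lemma IsMajorant.norm_sub_le_of_norm_sub_lt_one (hω : IsMajorant ω) (hC : 0 ≤ C) (hM : 0 ≤ M)
    (hint : ∀ a b, 0 < a → a ≤ b → b ≤ 1 → ∫ t in a..b, ω t / t ≤ M * ω b)
    (hf : DifferentiableOn ℝ f (ball 0 1))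
    (hbound : ∀ x ∈ ball (0 : E) 1, ‖fderiv ℝ f x‖ ≤ C * ω (1 - ‖x‖) / (1 - ‖x‖))
    {x y : E} (hx : x ∈ ball (0 : E) 1) (hy : y ∈ ball (0 : E) 1)
    (hxy₀ : 0 < ‖x - y‖) (hxy₁ : ‖x - y‖ < 1) :
    ‖f x - f y‖ ≤ C * (2 * M + 1) * ω ‖x - y‖ := by
  set d := ‖x - y‖
  set P := radialRetraction (E := E) (1 - d)
  have hP : ∀ z, P z ∈ closedBall (0 : E) (1 - d) := fun z =>
    mem_closedBall_zero_iff.2 (norm_radialRetraction_le (by linarith) z)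
  have hretract : ∀ z ∈ ball (0 : E) 1, ‖f z - f (P z)‖ ≤ C * M * ω d := fun z hz => by
    simpa using hω.norm_sub_radialRetraction_le hC hM hint hf hbound hz (ρ := 1 - d)
      (by linarith) (by linarith)
  have hmid : ‖f (P x) - f (P y)‖ ≤ C * ω d := by
    calc ‖f (P x) - f (P y)‖ ≤ C * ω (1 - (1 - d)) / (1 - (1 - d)) * ‖P x - P y‖ :=
          norm_sub_le_of_mem_closedBall (φ := fun t => C * ω t / t) hf
            (hω.antitoneOn_const_mul_div hC) hbound (by linarith) (hP x) (hP y)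
      _ ≤ C * ω d / d * d := by
          rw [sub_sub_cancel]
          exact mul_le_mul_of_nonneg_left (norm_radialRetraction_sub_le (by linarith) x y)
            (div_nonneg (mul_nonneg hC (hω.nonneg hxy₀.le)) hxy₀.le)
      _ = C * ω d := div_mul_cancel₀ _ hxy₀.ne'
  calc ‖f x - f y‖ ≤ ‖f x - f (P x)‖ + ‖f (P x) - f (P y)‖ + ‖f (P y) - f y‖ := by
        simpa only [dist_eq_norm] using dist_triangle4 (f x) (f (P x)) (f (P y)) (f y)
    _ ≤ C * M * ω d + C * ω d + C * M * ω d := by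
        rw [norm_sub_rev (f (P y))]
        gcongr
        exacts [hretract x hx, hretract y hy]
    _ = C * (2 * M + 1) * ω d := by ring

theorem IsMajorant.norm_sub_le_of_norm_fderiv_le (hω : IsMajorant ω) (hC : 0 ≤ C) (hM : 0 ≤ M)
    (hint : ∀ a b, 0 < a → a ≤ b → b ≤ 1 → ∫ t in a..b, ω t / t ≤ M * ω b)
    (hf : DifferentiableOn ℝ f (ball 0 1))
    (hbound : ∀ x ∈ ball (0 : E) 1, ‖fderiv ℝ f x‖ ≤ C * ω (1 - ‖x‖) / (1 - ‖x‖))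
    {x y : E} (hx : x ∈ ball (0 : E) 1) (hy : y ∈ ball (0 : E) 1) :
    ‖f x - f y‖ ≤ C * (2 * M + 1) * ω ‖x - y‖ := by
  have hωxy : 0 ≤ C * ω ‖x - y‖ := mul_nonneg hC (hω.nonneg (norm_nonneg _))
  obtain rfl | hxy := eq_or_ne x y
  · rw [sub_self, norm_zero]
    nlinarith
  obtain hfar | hnear := le_or_gt 1 ‖x - y‖
  · have := hω.norm_sub_le_of_one_le_norm_sub hC hM hint hf hbound hx hy hfar
    nlinarith
  · exact hω.norm_sub_le_of_norm_sub_lt_one hC hM hint hf hbound hx hy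
      (norm_pos_iff.2 (sub_ne_zero.2 hxy)) hnear

end InnerProductSpace

theorem lipschitz_from_gradient_bound_general (n : ℕ)
    (ω : ℝ → ℝ) (hω : IsFastMajorant ω) (u : EuclideanSpace ℝ (Fin n) → ℝ)
    (hu : DifferentiableOn ℝ u (Metric.ball (0 : EuclideanSpace ℝ (Fin n)) 1))
    (M₀ : ℝ) (hM₀ : 0 < M₀)
    (hgrad : ∀ x ∈ Metric.ball (0 : EuclideanSpace ℝ (Fin n)) 1,
      ‖gradient u x‖ ≤ M₀ * ω (1 - ‖x‖) / (1 - ‖x‖)) :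
    ∃ M > (0 : ℝ), ∀ x ∈ Metric.ball (0 : EuclideanSpace ℝ (Fin n)) 1,
      ∀ y ∈ Metric.ball (0 : EuclideanSpace ℝ (Fin n)) 1,
        |u x - u y| ≤ M * ω ‖x - y‖ := by
  obtain ⟨M₁, hM₁, hint⟩ := hω.exists_integral_div_le 1
  have hfderiv : ∀ x ∈ ball (0 : EuclideanSpace ℝ (Fin n)) 1,
      ‖fderiv ℝ u x‖ ≤ M₀ * ω (1 - ‖x‖) / (1 - ‖x‖) := fun x hx => by
    simpa [gradient] using hgrad x hx
  refine ⟨M₀ * (2 * M₁ + 1), by positivity, fun x hx y hy => ?_⟩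
  simpa only [Real.norm_eq_abs] using
    hω.1.norm_sub_le_of_norm_fderiv_le hM₀.le hM₁ hint hu hfderiv hx hy

/-- **Lipschitz continuity from a gradient bound.** Let `n ≥ 2` and let `ω` be a fast
majorant. If `u` is differentiable on `B^n` and `|∇u(x)| ≤ M₀ ω(1−|x|)/(1−|x|)` on
`B^n`, then `u ∈ Λ_ω(B^n)`. -/
theorem lipschitz_from_gradient_bound (n : ℕ) (hn : 2 ≤ n)
    (ω : ℝ → ℝ) (hω : IsFastMajorant ω) (u : EuclideanSpace ℝ (Fin n) → ℝ)
    (hu : DifferentiableOn ℝ u (Metric.ball (0 : EuclideanSpace ℝ (Fin n)) 1))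
    (M₀ : ℝ) (hM₀ : 0 < M₀)
    (hgrad : ∀ x ∈ Metric.ball (0 : EuclideanSpace ℝ (Fin n)) 1,
      ‖gradient u x‖ ≤ M₀ * ω (1 - ‖x‖) / (1 - ‖x‖)) :
    ∃ M > (0 : ℝ), ∀ x ∈ Metric.ball (0 : EuclideanSpace ℝ (Fin n)) 1,
      ∀ y ∈ Metric.ball (0 : EuclideanSpace ℝ (Fin n)) 1,
        |u x - u y| ≤ M * ω ‖x - y‖ :=
  lipschitz_from_gradient_bound_general n ω hω u hu M₀ hM₀ hgrad
end
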